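/- Under the setting of independent empirical p-values (each null test point distributed as P0, each p̂_i computed from its own independent calibration set of n i.i.d. P0 points, atomless score distribution), let α ∈ (0,1], let ℓ ≥ 1 be any integer and take the calibration set cardinality n = ⌈ℓm/α⌉ − 1. Then the FDR of the BH procedure at level α applied to (p̂_1,…,p̂_m) satisfies the two-sided bound (n/(n+1))·(m0·α/m) ≤ FDR ≤ m0·α/m. -/

import Mathlib

/-! BH rejects `i` among exactly `k` rejections iff `p i ≤ α k / m` and BH applied to `p` with
`p i` replaced by `0` makes `R⁽ⁱ⁾ = k` rejections. Each empirical p-value is independent of all the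
others, whose calibration sets are disjoint from its own, so
`FDR = ∑_{i ∈ H0} ∑_k P(p̂ i ≤ α k / m) P(R⁽ⁱ⁾ = k) / k` with `∑_k P(R⁽ⁱ⁾ = k) = 1`.
The `n + 1` scores behind a null `p̂ i` are i.i.d. and atomless, hence exchangeable and a.s.
distinct, so the rank of the test score among them is uniform and
`P(p̂ i ≤ c) = (⌊n c⌋ + 1) / (n + 1)`. For `n + 1 = ⌈ℓ m / α⌉` this lies between `n c / (n + 1)`
and `c` on the grid `c = α k / m`, which gives both bounds. -/

open MeasureTheory ProbabilityTheory Finset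
open scoped Classical ENNReal

/-- Hypothesis `i` is rejected by the Benjamini–Hochberg procedure at level `α`. -/
def bhRejects (m : ℕ) (α : ℝ) (p : Fin m → ℝ) (i : Fin m) : Prop :=
  ∃ k ∈ Finset.Icc 1 m,
    p i ≤ α * k / m ∧
      k ≤ (Finset.univ.filter fun j => p j ≤ α * (k : ℝ) / m).card

/-- Number of rejections of the BH procedure at level `α`. -/
noncomputable def bhR (m : ℕ) (α : ℝ) (p : Fin m → ℝ) : ℕ :=
  (Finset.univ.filter fun i => bhRejects m α p i).card

/-- Number of false positives (rejected null hypotheses) of BH at level `α`. -/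
noncomputable def bhFP (m : ℕ) (α : ℝ) (H0 : Finset (Fin m)) (p : Fin m → ℝ) : ℕ :=
  (H0.filter fun i => bhRejects m α p i).card

/-- False discovery proportion of BH at level `α` (with the convention 0/0 = 0). -/
noncomputable def bhFDP (m : ℕ) (α : ℝ) (H0 : Finset (Fin m)) (p : Fin m → ℝ) : ℝ :=
  (bhFP m α H0 p : ℝ) / (bhR m α p : ℝ)

/-- Empirical p-value of a point `x` with respect to the calibration set `z`. -/
noncomputable def empPval {𝒳 : Type*} (n : ℕ) (a : 𝒳 → ℝ) (x : 𝒳) (z : Fin n → 𝒳) : ℝ :=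
  (1 / (n : ℝ)) * ∑ u : Fin n, if a x ≤ a (z u) then (1 : ℝ) else 0

section BenjaminiHochberg

variable {m : ℕ} {α : ℝ}

noncomputable def bhCount (p : Fin m → ℝ) (t : ℝ) : ℕ :=
  #{j | p j ≤ t}

/-- `0` means no rejection; otherwise the threshold `ε_BH` of BH is `α * bhMax m α p / m`. -/
noncomputable def bhMax (m : ℕ) (α : ℝ) (p : Fin m → ℝ) : ℕ :=
  Nat.findGreatest (fun k => k ≤ bhCount p (α * k / m)) m

lemma bhCount_le (p : Fin m → ℝ) (t : ℝ) : bhCount p t ≤ m :=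
  (card_filter_le _ _).trans_eq (card_fin m)

lemma bhCount_mono (p : Fin m → ℝ) {s t : ℝ} (hst : s ≤ t) : bhCount p s ≤ bhCount p t :=
  card_le_card fun _ => by simpa using fun h => h.trans hst

lemma bhCount_antitone {p q : Fin m → ℝ} (hpq : p ≤ q) (t : ℝ) : bhCount q t ≤ bhCount p t :=
  card_le_card fun j => by simpa using (hpq j).trans

lemma bhMax_le (p : Fin m → ℝ) : bhMax m α p ≤ m :=
  Nat.findGreatest_le m

lemma le_bhMax {p : Fin m → ℝ} {k : ℕ} (hkm : k ≤ m) (hk : k ≤ bhCount p (α * k / m)) :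
    k ≤ bhMax m α p :=
  Nat.le_findGreatest hkm hk

lemma bhMax_le_bhCount (p : Fin m → ℝ) : bhMax m α p ≤ bhCount p (α * bhMax m α p / m) :=
  Nat.findGreatest_spec (P := fun k => k ≤ bhCount p (α * k / m)) (Nat.zero_le m) (Nat.zero_le _)

lemma bhMax_antitone {p q : Fin m → ℝ} (hpq : p ≤ q) : bhMax m α q ≤ bhMax m α p :=
  le_bhMax (bhMax_le q) ((bhMax_le_bhCount q).trans (bhCount_antitone hpq _))

lemma update_zero_le {p : Fin m → ℝ} {i : Fin m} (hpi : 0 ≤ p i) : Function.update p i 0 ≤ p :=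
  fun j => by
    rcases eq_or_ne j i with rfl | hji
    · simpa using hpi
    · simp [hji]

lemma bhFDP_eq_sum (H0 : Finset (Fin m)) (p : Fin m → ℝ) :
    bhFDP m α H0 p = ∑ i ∈ H0, if bhRejects m α p i then (bhR m α p : ℝ)⁻¹ else 0 := by
  rw [bhFDP, bhFP, card_filter, Nat.cast_sum, sum_div]
  exact sum_congr rfl fun i _ => by split_ifs <;> simp

variable (hα : 0 ≤ α)
include hα

lemma bhThreshold_mono {k l : ℕ} (hkl : k ≤ l) : α * k / m ≤ α * l / m := by
  gcongr

lemma bhCount_bhMax (p : Fin m → ℝ) : bhCount p (α * bhMax m α p / m) = bhMax m α p := by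
  refine le_antisymm ?_ (bhMax_le_bhCount p)
  exact le_bhMax (bhCount_le p _)
    (bhCount_mono p (bhThreshold_mono hα (bhMax_le_bhCount p)))

lemma bhRejects_iff (p : Fin m → ℝ) (i : Fin m) :
    bhRejects m α p i ↔ 1 ≤ bhMax m α p ∧ p i ≤ α * bhMax m α p / m := by
  constructor
  · rintro ⟨k, hk, hpi, hkN⟩
    have hkM : k ≤ bhMax m α p := le_bhMax (mem_Icc.mp hk).2 hkN
    exact ⟨(mem_Icc.mp hk).1.trans hkM, hpi.trans (bhThreshold_mono hα hkM)⟩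
  · rintro ⟨hM, hpi⟩
    exact ⟨bhMax m α p, mem_Icc.mpr ⟨hM, bhMax_le p⟩, hpi, bhMax_le_bhCount p⟩

lemma bhR_eq_bhMax (p : Fin m → ℝ) : bhR m α p = bhMax m α p := by
  rcases Nat.eq_zero_or_pos (bhMax m α p) with hM | hM
  · simp [bhR, bhRejects_iff hα, hM]
  · rw [← bhCount_bhMax hα p, bhR, bhCount]
    congr 1
    exact filter_congr fun i _ => by simp [bhRejects_iff hα, Nat.one_le_iff_ne_zero.mpr hM.ne']

lemma one_le_bhMax_update (hm : 0 < m) (p : Fin m → ℝ) (i : Fin m) :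
    1 ≤ bhMax m α (Function.update p i 0) := by
  refine le_bhMax hm (card_pos.mpr ⟨i, ?_⟩)
  simp only [mem_filter, mem_univ, Function.update_self, true_and]
  positivity

lemma bhMax_update_zero {p : Fin m → ℝ} {i : Fin m} (hpi : 0 ≤ p i)
    (h : p i ≤ α * bhMax m α (Function.update p i 0) / m) :
    bhMax m α p = bhMax m α (Function.update p i 0) := by
  set p' := Function.update p i 0
  refine le_antisymm (bhMax_antitone (update_zero_le hpi)) (le_bhMax (bhMax_le p') ?_)
  convert bhMax_le_bhCount p' using 1
  refine congrArg card (filter_congr fun j _ => ?_)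
  rcases eq_or_ne j i with rfl | hji
  · simp only [p', Function.update_self]
    exact iff_of_true h (by positivity)
  · simp [p', hji]

lemma bhRejects_and_bhR_eq_iff (hm : 0 < m) {p : Fin m → ℝ} {i : Fin m} (hpi : 0 ≤ p i)
    (k : ℕ) :
    bhRejects m α p i ∧ bhR m α p = k ↔
      p i ≤ α * k / m ∧ bhR m α (Function.update p i 0) = k := by
  rw [bhR_eq_bhMax hα, bhR_eq_bhMax hα, bhRejects_iff hα]
  constructor
  · rintro ⟨⟨-, hpM⟩, rfl⟩
    refine ⟨hpM, (bhMax_update_zero hα hpi (hpM.trans ?_)).symm⟩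
    exact bhThreshold_mono hα (bhMax_antitone (update_zero_le hpi))
  · rintro ⟨hpk, rfl⟩
    rw [bhMax_update_zero hα hpi hpk]
    exact ⟨⟨one_le_bhMax_update hα hm p i, hpk⟩, rfl⟩

lemma ite_bhRejects_eq_sum (hm : 0 < m) {p : Fin m → ℝ} {i : Fin m} (hpi : 0 ≤ p i) :
    (if bhRejects m α p i then (bhR m α p : ℝ)⁻¹ else 0) =
      ∑ k ∈ Icc 1 m,
        if p i ≤ α * k / m ∧ bhR m α (Function.update p i 0) = k then (k : ℝ)⁻¹ else 0 := by
  simp_rw [← bhRejects_and_bhR_eq_iff hα hm hpi]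
  split_ifs with h
  · have hR : bhR m α p ∈ Icc 1 m := by
      rw [bhR_eq_bhMax hα]
      exact mem_Icc.mpr ⟨((bhRejects_iff hα p i).mp h).1, bhMax_le p⟩
    simp [h, hR]
  · simp [h]

end BenjaminiHochberg

section Measurability

variable {m : ℕ} {α : ℝ}

lemma measurable_bhCount (t : ℝ) : Measurable fun p : Fin m → ℝ => bhCount p t := by
  simp_rw [bhCount, card_filter]
  exact Finset.measurable_sum _ fun j _ =>
    Measurable.ite (measurableSet_le (measurable_pi_apply j) measurable_const)
      measurable_const measurable_const

lemma measurableSet_bhRejects (i : Fin m) : MeasurableSet {p : Fin m → ℝ | bhRejects m α p i} := by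
  have : {p : Fin m → ℝ | bhRejects m α p i} =
      ⋃ k ∈ Icc 1 m, {p | p i ≤ α * k / m} ∩ {p | k ≤ bhCount p (α * k / m)} := by
    ext
    simp only [bhRejects, bhCount, Set.mem_ofPred_eq, Set.mem_iUnion, Set.mem_inter_iff,
      exists_prop]
  rw [this]
  exact .biUnion (Icc 1 m).countable_toSet fun k _ =>
    (measurableSet_le (measurable_pi_apply i) measurable_const).inter
      (measurable_bhCount _ measurableSet_Ici)

lemma measurable_bhR : Measurable fun p : Fin m → ℝ => bhR m α p := by
  simp_rw [bhR, card_filter]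
  exact Finset.measurable_sum _ fun i _ =>
    Measurable.ite (measurableSet_bhRejects i) measurable_const measurable_const

end Measurability

section FDR

variable {Ω : Type*} [MeasurableSpace Ω] {μ : Measure Ω} [IsProbabilityMeasure μ]
  {m : ℕ} {α : ℝ} {P : Ω → Fin m → ℝ}

lemma sum_measureReal_bhR_update_eq_one (hm : 0 < m) (hα : 0 ≤ α) (hP : Measurable P)
    (i : Fin m) :
    ∑ k ∈ Icc 1 m, μ.real {ω | bhR m α (Function.update (P ω) i 0) = k} = 1 := by
  have hR : Measurable fun ω => bhR m α (Function.update (P ω) i 0) :=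
    measurable_bhR.comp (measurable_update_left.comp hP)
  refine (sum_measureReal_preimage_singleton _ fun k _ => hR (measurableSet_singleton k)).trans ?_
  convert probReal_univ (μ := μ)
  refine Set.eq_univ_of_forall fun ω => ?_
  simp only [Set.mem_preimage, coe_Icc, Set.mem_Icc, bhR_eq_bhMax hα]
  exact ⟨one_le_bhMax_update hα hm _ i, bhMax_le _⟩

lemma integral_bhFDP_eq_sum (hm : 0 < m) (hα : 0 ≤ α) (H0 : Finset (Fin m))
    (hP : Measurable P) (hP0 : ∀ ω j, 0 ≤ P ω j)
    (hind : ∀ i ∈ H0, IndepFun (fun ω => P ω i) (fun ω => Function.update (P ω) i 0) μ) :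
    ∫ ω, bhFDP m α H0 (P ω) ∂μ =
      ∑ i ∈ H0, ∑ k ∈ Icc 1 m, μ.real {ω | P ω i ≤ α * k / m} *
        μ.real {ω | bhR m α (Function.update (P ω) i 0) = k} * (k : ℝ)⁻¹ := by
  set A : Fin m → ℕ → Set Ω := fun i k => {ω | P ω i ≤ α * k / m}
  set B : Fin m → ℕ → Set Ω := fun i k => {ω | bhR m α (Function.update (P ω) i 0) = k}
  have hAB i k : MeasurableSet (A i k ∩ B i k) :=
    (measurableSet_le ((measurable_pi_apply i).comp hP) measurable_const).inter
      (measurable_bhR.comp (measurable_update_left.comp hP) (measurableSet_singleton k))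
  have hFDP ω : bhFDP m α H0 (P ω) =
      ∑ i ∈ H0, ∑ k ∈ Icc 1 m, (A i k ∩ B i k).indicator (fun _ => (k : ℝ)⁻¹) ω := by
    rw [bhFDP_eq_sum]
    refine sum_congr rfl fun i _ => (ite_bhRejects_eq_sum hα hm (hP0 ω i)).trans ?_
    simp [Set.indicator_apply, A, B]
  simp_rw [hFDP]
  rw [integral_finsetSum _ fun i _ => integrable_finsetSum _ fun k _ =>
    (integrable_const _).indicator (hAB i k)]
  refine sum_congr rfl fun i hi => ?_
  rw [integral_finsetSum _ fun k _ => (integrable_const _).indicator (hAB i k)]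
  refine sum_congr rfl fun k _ => ?_
  rw [integral_indicator_const _ (hAB i k), smul_eq_mul, measureReal_def,
    show μ (A i k ∩ B i k) = μ (A i k) * μ (B i k) from
      (hind i hi).measure_inter_preimage_eq_mul _ _ measurableSet_Iic
        (measurable_bhR (measurableSet_singleton k)), ENNReal.toReal_mul]
  rfl

theorem integral_bhFDP_mem_Icc_of_cdf_mem_Icc (hm : 0 < m) (hα : 0 ≤ α) (H0 : Finset (Fin m))
    (hP : Measurable P) (hP0 : ∀ ω j, 0 ≤ P ω j)
    (hind : ∀ i ∈ H0, IndepFun (fun ω => P ω i) (fun ω => Function.update (P ω) i 0) μ)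
    {lo hi : ℝ}
    (hcdf : ∀ i ∈ H0, ∀ k ∈ Icc 1 m,
      μ.real {ω | P ω i ≤ α * k / m} ∈ Set.Icc (lo * (α * k / m)) (hi * (α * k / m))) :
    ∫ ω, bhFDP m α H0 (P ω) ∂μ ∈ Set.Icc (lo * (#H0 * α / m)) (hi * (#H0 * α / m)) := by
  rw [integral_bhFDP_eq_sum hm hα H0 hP hP0 hind]
  set b : Fin m → ℕ → ℝ := fun i k => μ.real {ω | bhR m α (Function.update (P ω) i 0) = k}
  have hb i : ∑ k ∈ Icc 1 m, b i k = 1 := sum_measureReal_bhR_update_eq_one hm hα hP i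
  have hgrid (c : ℝ) {k : ℕ} (hk : k ∈ Icc 1 m) : c * (α * k / m) * (k : ℝ)⁻¹ = c * (α / m) := by
    have : (k : ℝ) ≠ 0 := by have := (mem_Icc.mp hk).1; positivity
    field_simp
  have hterm i (hiH : i ∈ H0) k (hk : k ∈ Icc 1 m) :
      lo * (α / m) * b i k ≤ μ.real {ω | P ω i ≤ α * k / m} * b i k * (k : ℝ)⁻¹ ∧
        μ.real {ω | P ω i ≤ α * k / m} * b i k * (k : ℝ)⁻¹ ≤ hi * (α / m) * b i k := by
    rw [← hgrid lo hk, ← hgrid hi hk, mul_right_comm _ (b i k)]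
    have hbk : 0 ≤ b i k := measureReal_nonneg
    have hk' : (0 : ℝ) ≤ (k : ℝ)⁻¹ := by positivity
    exact ⟨by gcongr; exact (hcdf i hiH k hk).1, by gcongr; exact (hcdf i hiH k hk).2⟩
  have hcard (c : ℝ) : c * (#H0 * α / m) = ∑ i ∈ H0, ∑ k ∈ Icc 1 m, c * (α / m) * b i k := by
    simp_rw [← mul_sum, hb, sum_const, nsmul_eq_mul]
    ring
  rw [hcard lo, hcard hi]
  exact ⟨sum_le_sum fun i hiH => sum_le_sum fun k hk => (hterm i hiH k hk).1,
    sum_le_sum fun i hiH => sum_le_sum fun k hk => (hterm i hiH k hk).2⟩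

end FDR

section UpperRank

variable {ι : Type*} [Fintype ι]

noncomputable def upperRank (v : ι) (w : ι → ℝ) : ℕ :=
  #{t | w v ≤ w t}

lemma one_le_upperRank (v : ι) (w : ι → ℝ) : 1 ≤ upperRank v w :=
  card_pos.mpr ⟨v, by simp⟩

lemma upperRank_le_card (v : ι) (w : ι → ℝ) : upperRank v w ≤ Fintype.card ι :=
  card_filter_le _ _

lemma upperRank_lt_of_lt {u v : ι} {w : ι → ℝ} (h : w u < w v) :
    upperRank v w < upperRank u w :=
  card_lt_card <| (ssubset_iff_of_subset fun t ht => by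
    simp only [mem_filter, mem_univ, true_and] at ht ⊢; exact h.le.trans ht).mpr
    ⟨u, by simp, by simpa using h⟩

lemma upperRank_injective {w : ι → ℝ} (hw : Function.Injective w) :
    Function.Injective fun v => upperRank v w := by
  intro u v huv
  by_contra hne
  rcases (hw.ne hne).lt_or_gt with h | h
  · exact (upperRank_lt_of_lt h).ne' huv
  · exact (upperRank_lt_of_lt h).ne huv

lemma exists_upperRank_eq {w : ι → ℝ} (hw : Function.Injective w) {s : ℕ}
    (hs : s ∈ Icc 1 (Fintype.card ι)) : ∃ v, upperRank v w = s := by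
  obtain ⟨v, -, hv⟩ := surj_on_of_inj_on_of_card_le (s := univ) (fun v _ => upperRank v w)
    (fun v _ => mem_Icc.mpr ⟨one_le_upperRank v w, upperRank_le_card v w⟩)
    (fun _ _ _ _ h => upperRank_injective hw h) (by simp) s hs
  exact ⟨v, hv.symm⟩

lemma upperRank_comp_perm (σ : Equiv.Perm ι) (v : ι) (w : ι → ℝ) :
    upperRank v (w ∘ σ) = upperRank (σ v) w := by
  simp only [upperRank, card_filter, Function.comp_apply]
  exact Equiv.sum_comp σ (fun t => if w (σ v) ≤ w t then 1 else 0)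

lemma measurable_upperRank (v : ι) : Measurable (upperRank v) := by
  unfold upperRank
  simp_rw [card_filter]
  exact Finset.measurable_sum _ fun t _ =>
    Measurable.ite (measurableSet_le (measurable_pi_apply v) (measurable_pi_apply t))
      measurable_const measurable_const

end UpperRank

section IIDRanks

lemma measurePreserving_comp_perm {ι β : Type*} [Fintype ι] [MeasurableSpace β]
    (ν : Measure β) [SigmaFinite ν] (σ : Equiv.Perm ι) :
    MeasurePreserving (fun w : ι → β => w ∘ σ) (Measure.pi fun _ => ν) (Measure.pi fun _ => ν) := by
  convert measurePreserving_piCongrLeft (fun _ : ι => ν) σ.symm using 1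
  ext w i
  simp [MeasurableEquiv.piCongrLeft, Equiv.piCongrLeft_apply_eq_cast]

variable {ι : Type*} [Fintype ι] {ν : Measure ℝ} [IsProbabilityMeasure ν] [NullSingletonClass ν]

lemma pi_setOf_eval_eq_eval_eq_zero {t t' : ι} (htt : t ≠ t') :
    Measure.pi (fun _ : ι => ν) {w | w t = w t'} = 0 := by
  have hind : IndepFun (fun w : ι → ℝ => w t) (fun w => w t') (Measure.pi fun _ => ν) :=
    (iIndepFun_pi (X := fun _ => id) fun _ => aemeasurable_id).indepFun htt
  have hmap : (Measure.pi fun _ : ι => ν).map (fun w => (w t, w t')) = ν.prod ν := by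
    rw [(indepFun_iff_map_prod_eq_prod_map_map (measurable_pi_apply t).aemeasurable
      (measurable_pi_apply t').aemeasurable).mp hind, (measurePreserving_eval _ t).map_eq,
      (measurePreserving_eval _ t').map_eq]
  have hdiag : MeasurableSet {q : ℝ × ℝ | q.1 = q.2} := measurableSet_diagonal
  calc Measure.pi (fun _ : ι => ν) {w | w t = w t'}
      = (Measure.pi fun _ : ι => ν).map (fun w => (w t, w t')) {q | q.1 = q.2} :=
        (Measure.map_apply (by fun_prop : Measurable fun w : ι → ℝ => (w t, w t')) hdiag).symm
    _ = 0 := by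
        rw [hmap, Measure.prod_apply hdiag]
        simp [Set.preimage]

lemma ae_injective_pi : ∀ᵐ w ∂(Measure.pi fun _ : ι => ν), Function.Injective w := by
  have h t t' : ∀ᵐ w ∂(Measure.pi fun _ : ι => ν), w t = w t' → t = t' := by
    by_cases htt : t = t'
    · exact ae_of_all _ fun _ _ => htt
    · filter_upwards [measure_eq_zero_iff_ae_notMem.mp (pi_setOf_eval_eq_eval_eq_zero htt)]
        with w hw h using absurd h hw
  filter_upwards [ae_all_iff.mpr fun t => ae_all_iff.mpr (h t)] with w hw using fun _ _ => hw _ _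

lemma pi_upperRank_eq (v : ι) {s : ℕ} (hs : s ∈ Icc 1 (Fintype.card ι)) :
    Measure.pi (fun _ : ι => ν) {w | upperRank v w = s} = (Fintype.card ι : ℝ≥0∞)⁻¹ := by
  set μ := Measure.pi fun _ : ι => ν
  set E : ι → Set (ι → ℝ) := fun u => {w | upperRank u w = s}
  have hEm u : MeasurableSet (E u) := measurable_upperRank u (measurableSet_singleton s)
  have hE u : μ (E u) = μ (E v) := by
    have h := (measurePreserving_comp_perm ν (Equiv.swap u v)).measure_preimage
      (hEm v).nullMeasurableSet
    rw [← h]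
    congr 1
    ext w
    simp [E, upperRank_comp_perm]
  have hnull : μ {w | ¬ Function.Injective w} = 0 := ae_iff.mp ae_injective_pi
  have hdisj : Pairwise (Function.onFun (AEDisjoint μ) E) := fun u u' huu' =>
    measure_mono_null (fun w hw hinj => huu' (upperRank_injective hinj (hw.1.trans hw.2.symm)))
      hnull
  have hunion : μ (⋃ u, E u) = 1 :=
    (prob_compl_eq_zero_iff (.iUnion hEm)).mp <| measure_mono_null (fun w hw hinj =>
      hw (Set.mem_iUnion.mpr (exists_upperRank_eq hinj hs))) hnull
  rw [measure_iUnion₀ hdisj fun u => (hEm u).nullMeasurableSet, tsum_fintype] at hunion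
  simp_rw [hE, sum_const, card_univ, nsmul_eq_mul] at hunion
  exact ENNReal.eq_inv_of_mul_eq_one_left (by rw [mul_comm, hunion])

lemma pi_upperRank_le (v : ι) {j : ℕ} (hj : j ≤ Fintype.card ι) :
    Measure.pi (fun _ : ι => ν) {w | upperRank v w ≤ j} = j * (Fintype.card ι : ℝ≥0∞)⁻¹ := by
  have hset : {w | upperRank v w ≤ j} = upperRank v ⁻¹' ↑(Icc 1 j) := by
    ext w
    simp [one_le_upperRank v w]
  rw [hset, ← sum_measure_preimage_singleton _ fun s _ =>
    measurable_upperRank v (measurableSet_singleton s)]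
  refine (sum_congr rfl fun s hs => pi_upperRank_eq v (mem_Icc.mpr ⟨(mem_Icc.mp hs).1,
    (mem_Icc.mp hs).2.trans hj⟩)).trans ?_
  simp

end IIDRanks

section EmpiricalPValue

variable {𝒳 : Type*} {n : ℕ} {a : 𝒳 → ℝ}

lemma empPval_nonneg (x : 𝒳) (z : Fin n → 𝒳) : 0 ≤ empPval n a x z :=
  mul_nonneg (by positivity) (sum_nonneg fun _ _ => by split_ifs <;> norm_num)

lemma card_add_one_eq_upperRank_zero (w : Fin (n + 1) → ℝ) :
    #{u : Fin n | w 0 ≤ w u.succ} + 1 = upperRank 0 w := by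
  simp only [upperRank, card_filter, Fin.sum_univ_succ, le_refl, if_true]
  ring

lemma natCast_mul_empPval (hn : n ≠ 0) (x : 𝒳) (z : Fin n → 𝒳) :
    (n : ℝ) * empPval n a x z = #{u | a x ≤ a (z u)} := by
  rw [empPval, ← mul_assoc, mul_one_div_cancel (Nat.cast_ne_zero.mpr hn), one_mul, card_filter]
  push_cast
  rfl

lemma empPval_le_iff (hn : 0 < n) {c : ℝ} (hc : 0 ≤ c) (x : 𝒳) (z : Fin n → 𝒳) :
    empPval n a x z ≤ c ↔
      upperRank 0 (fun t => a ((Fin.cons x z : Fin (n + 1) → 𝒳) t)) ≤ ⌊n * c⌋₊ + 1 := by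
  rw [← card_add_one_eq_upperRank_zero, add_le_add_iff_right]
  simp only [Fin.cons_zero, Fin.cons_succ]
  rw [Nat.le_floor_iff (by positivity), ← natCast_mul_empPval hn.ne',
    mul_le_mul_iff_right₀ (by exact_mod_cast hn)]

lemma measurable_empPval {Ω : Type*} {mΩ : MeasurableSpace Ω} [MeasurableSpace 𝒳]
    (ha : Measurable a) {X : Ω → 𝒳} {Z : Fin n → Ω → 𝒳} (hX : Measurable X)
    (hZ : ∀ u, Measurable (Z u)) :
    Measurable fun ω => empPval n a (X ω) (fun u => Z u ω) :=
  (Finset.measurable_sum _ fun u _ => Measurable.ite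
    (measurableSet_le (ha.comp hX) (ha.comp (hZ u))) measurable_const measurable_const).const_mul _

theorem measureReal_empPval_le {Ω : Type*} [MeasurableSpace Ω] [MeasurableSpace 𝒳]
    {μ : Measure Ω} [IsProbabilityMeasure μ] {P0 : Measure 𝒳} [IsProbabilityMeasure P0]
    (hn : 0 < n) (ha : Measurable a) (hatomless : ∀ r : ℝ, P0 {x | a x = r} = 0)
    {X : Ω → 𝒳} {Z : Fin n → Ω → 𝒳} (hX : Measurable X) (hZ : ∀ u, Measurable (Z u))
    (hind : iIndepFun (Fin.cons X Z : Fin (n + 1) → Ω → 𝒳) μ)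
    (hXlaw : μ.map X = P0) (hZlaw : ∀ u, μ.map (Z u) = P0) {c : ℝ} (hc0 : 0 ≤ c) (hc1 : c ≤ 1) :
    μ.real {ω | empPval n a (X ω) (fun u => Z u ω) ≤ c} = (⌊n * c⌋₊ + 1) / (n + 1) := by
  set Y : Fin (n + 1) → Ω → 𝒳 := Fin.cons X Z
  have hY t : Measurable (Y t) := Fin.cases hX hZ t
  have hYlaw t : μ.map (Y t) = P0 := Fin.cases hXlaw hZlaw t
  set ν := P0.map a
  have : IsProbabilityMeasure ν := Measure.isProbabilityMeasure_map ha.aemeasurable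
  have : NullSingletonClass ν :=
    ⟨fun r => by rw [Measure.map_apply ha (measurableSet_singleton r)]; exact hatomless r⟩
  have hW : Measurable fun ω t => a (Y t ω) := measurable_pi_lambda _ fun t => ha.comp (hY t)
  have hlaw : μ.map (fun ω t => a (Y t ω)) = Measure.pi fun _ => ν := by
    refine ((hind.comp (fun _ => a) fun _ => ha).map_fun_eq_pi_map
      fun t => (ha.comp (hY t)).aemeasurable).trans ?_
    congr with t : 1
    rw [← Measure.map_map ha (hY t), hYlaw t]
  have hfloor : ⌊n * c⌋₊ + 1 ≤ Fintype.card (Fin (n + 1)) := by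
    rw [Fintype.card_fin, add_le_add_iff_right]
    exact Nat.floor_le_of_le (by nlinarith)
  have hYω ω : (fun t => Y t ω) = Fin.cons (X ω) fun u => Z u ω :=
    funext fun t => Fin.cases rfl (fun _ => rfl) t
  have hset : {ω | empPval n a (X ω) (fun u => Z u ω) ≤ c} =
      (fun ω t => a (Y t ω)) ⁻¹' {w | upperRank 0 w ≤ ⌊n * c⌋₊ + 1} := by
    ext ω
    simp only [Set.mem_ofPred_eq, Set.mem_preimage, empPval_le_iff hn hc0, ← hYω]
  have hrank : MeasurableSet {w : Fin (n + 1) → ℝ | upperRank 0 w ≤ ⌊n * c⌋₊ + 1} :=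
    measurable_upperRank 0 measurableSet_Iic
  rw [hset, measureReal_def, ← Measure.map_apply hW hrank, hlaw, pi_upperRank_le 0 hfloor]
  rw [ENNReal.toReal_mul, ENNReal.toReal_inv, Fintype.card_fin, div_eq_mul_inv]
  norm_cast

end EmpiricalPValue

lemma ProbabilityTheory.iIndepFun.indepFun_of_measurable_iSup {Ω ι β γ δ : Type*}
    {mΩ : MeasurableSpace Ω} {μ : Measure Ω} [mβ : MeasurableSpace β] [MeasurableSpace γ]
    [MeasurableSpace δ] {F : ι → Ω → β} (hF : iIndepFun F μ) (hFm : ∀ i, Measurable (F i))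
    {S T : Set ι} (hST : Disjoint S T) {f : Ω → γ} {g : Ω → δ}
    (hf : Measurable[⨆ i ∈ S, mβ.comap (F i)] f) (hg : Measurable[⨆ i ∈ T, mβ.comap (F i)] g) :
    IndepFun f g μ := by
  rw [IndepFun_iff_Indep]
  exact indep_of_indep_of_le_right (indep_of_indep_of_le_left
    (indep_iSup_of_disjoint (fun i => (hFm i).comap_le) ((iIndepFun_iff_iIndep _ _ _).mp hF) hST)
    hf.comap_le) hg.comap_le

section Calibration

variable {Ω 𝒳 : Type*} [MeasurableSpace Ω] [MeasurableSpace 𝒳] {μ : Measure Ω} {m n : ℕ}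
  {X : Fin m → Ω → 𝒳} {Z : Fin m → Fin n → Ω → 𝒳}
  (hindep : iIndepFun
    (Sum.elim X (fun q : Fin m × Fin n => Z q.1 q.2) : Fin m ⊕ (Fin m × Fin n) → Ω → 𝒳) μ)
include hindep

lemma iIndepFun_fin_cons_calibration (i : Fin m) :
    iIndepFun (Fin.cons (X i) (Z i) : Fin (n + 1) → Ω → 𝒳) μ := by
  have he : Function.Injective
      (Fin.cons (Sum.inl i) (fun u => Sum.inr (i, u)) : Fin (n + 1) → Fin m ⊕ Fin m × Fin n) :=
    Fin.cons_injective_iff.mpr ⟨by simp, fun u v h => by simpa using h⟩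
  convert hindep.precomp he using 1
  exact funext fun t => Fin.cases rfl (fun _ => rfl) t

lemma indepFun_empPval_update {a : 𝒳 → ℝ} (ha : Measurable a) (hX : ∀ i, Measurable (X i))
    (hZ : ∀ i u, Measurable (Z i u)) (i : Fin m) :
    IndepFun (fun ω => empPval n a (X i ω) (fun u => Z i u ω))
      (fun ω => Function.update (fun j => empPval n a (X j ω) (fun u => Z j u ω)) i 0) μ := by
  set F : Fin m ⊕ (Fin m × Fin n) → Ω → 𝒳 := Sum.elim X (fun q => Z q.1 q.2)
  set block : Fin m ⊕ (Fin m × Fin n) → Fin m := Sum.elim id Prod.fst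
  have hblock (S : Set (Fin m ⊕ (Fin m × Fin n))) (j : Fin m) (hS : block ⁻¹' {j} ⊆ S) :
      Measurable[⨆ s ∈ S, MeasurableSpace.comap (F s) ‹_›]
        fun ω => empPval n a (X j ω) (fun u => Z j u ω) := by
    have hF s (hs : s ∈ S) : Measurable[⨆ s ∈ S, MeasurableSpace.comap (F s) ‹_›] (F s) :=
      Measurable.of_comap_le
        (le_iSup₂ (f := fun s (_ : s ∈ S) => MeasurableSpace.comap (F s) ‹_›) s hs)
    exact measurable_empPval ha (hF (Sum.inl j) (hS rfl)) fun u => hF (Sum.inr (j, u)) (hS rfl)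
  refine hindep.indepFun_of_measurable_iSup (Sum.rec hX fun q => hZ q.1 q.2)
    (disjoint_compl_right.preimage block) (hblock _ i subset_rfl) ?_
  refine @measurable_pi_lambda _ _ _ (_) _ _ fun j => ?_
  rcases eq_or_ne j i with rfl | hji
  · simp
  · simp only [Function.update_of_ne hji]
    exact hblock (block ⁻¹' {i}ᶜ) j fun s (hs : block s = j) => show block s ≠ i from hs ▸ hji

end Calibration

/-- `(ℓ m / α) * (α k / m) = ℓ k` is an integer lying in `(n c, (n + 1) c]` for `c = α k / m`. -/
lemma natFloor_add_one_le_of_calibration {n ℓ m k : ℕ} {α : ℝ} (hα : 0 < α) (hm : 0 < m)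
    (hk : 0 < k) (hcal : (n : ℝ) = (⌈(ℓ : ℝ) * m / α⌉ : ℝ) - 1) :
    (⌊n * (α * k / m)⌋₊ : ℝ) + 1 ≤ (n + 1) * (α * k / m) := by
  have hc : 0 < α * k / m := by positivity
  have hscale : ℓ * m / α * (α * k / m) = ℓ * k := by field_simp
  have hlt : n * (α * k / m) < ℓ * k := by
    rw [← hscale]
    gcongr
    linarith [Int.ceil_lt_add_one ((ℓ : ℝ) * m / α)]
  have hle : (ℓ * k : ℝ) ≤ (n + 1) * (α * k / m) := by
    rw [← hscale]
    gcongr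
    linarith [Int.le_ceil ((ℓ : ℝ) * m / α)]
  have hfloor : ⌊n * (α * k / m)⌋₊ < ℓ * k :=
    (Nat.floor_lt (by positivity)).mpr (by exact_mod_cast hlt)
  calc (⌊n * (α * k / m)⌋₊ : ℝ) + 1 ≤ ℓ * k := by exact_mod_cast hfloor
    _ ≤ _ := hle

/-- with independent empirical p-values, own calibration sets of
cardinality `n = ⌈ℓ m / α⌉ - 1` for some integer `ℓ ≥ 1`, the FDR of BH at level `α`
satisfies `(n/(n+1)) * (m0 α / m) ≤ FDR ≤ m0 α / m`. -/
theorem bh_empirical_fdr_two_sided_bound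
    {Ω 𝒳 : Type*} [MeasurableSpace Ω] [MeasurableSpace 𝒳]
    (μ : Measure Ω) [IsProbabilityMeasure μ]
    (P0 : Measure 𝒳) [IsProbabilityMeasure P0]
    (m n m0 : ℕ) (hm : 0 < m) (hn : 0 < n)
    (H0 : Finset (Fin m)) (hcard : H0.card = m0)
    (a : 𝒳 → ℝ) (ha : Measurable a)
    (X : Fin m → Ω → 𝒳) (Z : Fin m → Fin n → Ω → 𝒳)
    (hXmeas : ∀ i, Measurable (X i)) (hZmeas : ∀ i j, Measurable (Z i j))
    (hindep : iIndepFun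
      (Sum.elim X (fun q : Fin m × Fin n => Z q.1 q.2) : Fin m ⊕ (Fin m × Fin n) → Ω → 𝒳) μ)
    (hXlaw : ∀ i ∈ H0, μ.map (X i) = P0)
    (hZlaw : ∀ i j, μ.map (Z i j) = P0)
    (hatomless : ∀ r : ℝ, P0 {x | a x = r} = 0)
    (α : ℝ) (hα : α ∈ Set.Ioc (0 : ℝ) 1)
    (hcal : ∃ ℓ : ℕ, 1 ≤ ℓ ∧ (n : ℝ) = (⌈(ℓ : ℝ) * m / α⌉ : ℝ) - 1) :
    ((n : ℝ) / (n + 1)) * (m0 * α / m)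
        ≤ ∫ ω, bhFDP m α H0 (fun j => empPval n a (X j ω) (fun u => Z j u ω)) ∂μ
      ∧ ∫ ω, bhFDP m α H0 (fun j => empPval n a (X j ω) (fun u => Z j u ω)) ∂μ
        ≤ m0 * α / m := by
  obtain ⟨hα0, hα1⟩ := hα
  obtain ⟨ℓ, -, hℓ⟩ := hcal
  set P : Ω → Fin m → ℝ := fun ω j => empPval n a (X j ω) (fun u => Z j u ω)
  have hP : Measurable P :=
    measurable_pi_lambda _ fun j => measurable_empPval ha (hXmeas j) (hZmeas j)
  have hcdf : ∀ i ∈ H0, ∀ k ∈ Icc 1 m, μ.real {ω | P ω i ≤ α * k / m} ∈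
      Set.Icc ((n / (n + 1) : ℝ) * (α * k / m)) (1 * (α * k / m)) := by
    intro i hi k hk
    obtain ⟨hk1, hkm⟩ := mem_Icc.mp hk
    have hc1 : α * k / m ≤ 1 := by
      rw [div_le_one (by positivity)]
      nlinarith [(Nat.cast_le (α := ℝ)).mpr hkm]
    rw [measureReal_empPval_le hn ha hatomless (hXmeas i) (hZmeas i)
      (iIndepFun_fin_cons_calibration hindep i) (hXlaw i hi) (hZlaw i) (by positivity) hc1,
      Set.mem_Icc, one_mul, div_mul_eq_mul_div, div_le_div_iff_of_pos_right (by positivity),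
      div_le_iff₀ (by positivity), mul_comm (α * k / m)]
    exact ⟨(Nat.lt_floor_add_one _).le, natFloor_add_one_le_of_calibration hα0 hm hk1 hℓ⟩
  have h := integral_bhFDP_mem_Icc_of_cdf_mem_Icc hm hα0.le H0 hP (fun _ _ => empPval_nonneg _ _)
    (fun i _ => indepFun_empPval_update hindep ha hXmeas hZmeas i) hcdf
  rwa [hcard, one_mul] at h
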